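/- Let N be a positive integer and q ∈ ℂ with |q| < 1. Let z, c ∈ ℂ with z·q^k ≠ 1 and c·q^k ≠ 1 for 1 ≤ k ≤ N. Then ∑_{n=1}^{N} [N choose n]_q · (q;q)_n (zc)^n q^{n^2} / ((zq;q)_n (cq;q)_n) = z · ∑_{n=1}^{N} [N choose n]_q · (q;q)_n (cq;q)_{N−n} (cq)^n / ((zq;q)_n (cq;q)_N). -/

import Mathlib

open Finset

/-- Finite q-Pochhammer symbol `(a;q)_n = ∏_{k=0}^{n-1} (1 - a q^k)`. -/
noncomputable def qPoch (q a : ℂ) (n : ℕ) : ℂ :=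
  ∏ k ∈ Finset.range n, (1 - a * q ^ k)

/-- Infinite q-Pochhammer symbol `(a;q)_∞ = ∏_{k=0}^{∞} (1 - a q^k)`. -/
noncomputable def qPochInf (q a : ℂ) : ℂ :=
  ∏' k : ℕ, (1 - a * q ^ k)

/-- Gaussian (q-binomial) coefficient `[N choose n]_q`. -/
noncomputable def qBinom (q : ℂ) (N n : ℕ) : ℂ :=
  qPoch q q N / (qPoch q q n * qPoch q q (N - n))

/-!
Multiplying by `(zq;q)_N (cq;q)_N` turns the two sums, started at `n = 0`, into polynomials
`L_N(z, c)` and `R_N(z, c)`; the theorem says `L_N(z, c) = (1 - z) (zq;q)_N (cq;q)_N + z R_N(z, c)`.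
Splitting off the `n = 0` term gives the recurrences
`L_{N+1}(z, c) = (zq;q)_{N+1} (cq;q)_{N+1} + (1 - q^{N+1}) zcq L_N(zq, cq)` and
`R_{N+1}(z, c) = (zq;q)_{N+1} (cq;q)_{N+1} + (1 - q^{N+1}) cq R_N(zq, c)`,
so the theorem reduces to `L_N(z, cq) = R_N(z, c)`. That follows by induction on `N` from the
contiguous relation `R_N(z, c) - z R_N(z, cq) = (z;q)_{N+1} (cq²;q)_N`, itself proved by induction.
-/

section QPochhammer

variable (q : ℂ)

@[simp]
lemma qPoch_zero (a : ℂ) : qPoch q a 0 = 1 := prod_range_zero _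

lemma qPoch_succ (a : ℂ) (n : ℕ) : qPoch q a (n + 1) = qPoch q a n * (1 - a * q ^ n) :=
  prod_range_succ _ n

lemma qPoch_succ' (a : ℂ) (n : ℕ) : qPoch q a (n + 1) = (1 - a) * qPoch q (a * q) n := by
  rw [qPoch, prod_range_succ', mul_comm, qPoch]
  simp only [pow_succ', pow_zero, mul_one, mul_assoc]

lemma qPoch_add (a : ℂ) (m n : ℕ) :
    qPoch q a (m + n) = qPoch q a m * qPoch q (a * q ^ m) n := by
  simp only [qPoch, prod_range_add, pow_add, mul_assoc]

/-- `qDescFactorial q N n = (1 - q^N) ⋯ (1 - q^(N-n+1))`, which is `(q;q)_N / (q;q)_(N-n)`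
for `n ≤ N` but needs no division. -/
noncomputable def qDescFactorial (N n : ℕ) : ℂ :=
  ∏ k ∈ range n, (1 - q ^ (N - k))

@[simp]
lemma qDescFactorial_zero (N : ℕ) : qDescFactorial q N 0 = 1 := prod_range_zero _

lemma qDescFactorial_succ_succ (N n : ℕ) :
    qDescFactorial q (N + 1) (n + 1) = (1 - q ^ (N + 1)) * qDescFactorial q N n := by
  simp only [qDescFactorial, prod_range_succ', Nat.add_sub_add_right, Nat.sub_zero, mul_comm]

lemma qPoch_add_eq_mul_qDescFactorial (m n : ℕ) :
    qPoch q q (m + n) = qPoch q q m * qDescFactorial q (m + n) n := by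
  induction n with
  | zero => simp
  | succ n ih =>
    rw [← add_assoc, qPoch_succ, ih, qDescFactorial_succ_succ, ← pow_succ']
    ring

lemma qBinom_mul_qPoch {N n : ℕ} (hn : n ≤ N) (h₁ : qPoch q q n ≠ 0)
    (h₂ : qPoch q q (N - n) ≠ 0) : qBinom q N n * qPoch q q n = qDescFactorial q N n := by
  obtain ⟨m, rfl⟩ := Nat.exists_eq_add_of_le' hn
  rw [Nat.add_sub_cancel] at h₂
  rw [qBinom, Nat.add_sub_cancel, qPoch_add_eq_mul_qDescFactorial]
  field_simp

lemma qPoch_ne_zero {a : ℂ} {N : ℕ} (h : ∀ k ∈ Icc 1 N, a * q ^ k ≠ 1) :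
    qPoch q (a * q) N ≠ 0 := by
  refine prod_ne_zero_iff.2 fun k hk => sub_ne_zero.2 fun h1 => ?_
  refine h (k + 1) (mem_Icc.2 ⟨Nat.le_add_left 1 k, mem_range.1 hk⟩) ?_
  rw [h1, pow_succ', mul_assoc]

end QPochhammer

lemma sum_range_succ_eq_add_sum_Icc {M : Type*} [AddCommMonoid M] (f : ℕ → M) (N : ℕ) :
    ∑ n ∈ range (N + 1), f n = f 0 + ∑ n ∈ Icc 1 N, f n := by
  rw [range_eq_Ico, sum_eq_sum_Ico_succ_bot (Nat.add_one_pos N), zero_add,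
    ← Ico_add_one_right_eq_Icc]

section ClearedSums

variable (q : ℂ)

noncomputable def leftPoly (N : ℕ) (z c : ℂ) : ℂ :=
  ∑ n ∈ range (N + 1), qDescFactorial q N n * (z * c) ^ n * q ^ (n ^ 2) *
    (qPoch q (z * q * q ^ n) (N - n) * qPoch q (c * q * q ^ n) (N - n))

noncomputable def rightPoly (N : ℕ) (z c : ℂ) : ℂ :=
  ∑ n ∈ range (N + 1), qDescFactorial q N n * (c * q) ^ n *
    (qPoch q (z * q * q ^ n) (N - n) * qPoch q (c * q) (N - n))

lemma leftPoly_zero (z c : ℂ) : leftPoly q 0 z c = 1 := by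
  simp [leftPoly]

lemma rightPoly_zero (z c : ℂ) : rightPoly q 0 z c = 1 := by
  simp [rightPoly]

lemma leftPoly_succ (N : ℕ) (z c : ℂ) :
    leftPoly q (N + 1) z c = qPoch q (z * q) (N + 1) * qPoch q (c * q) (N + 1) +
      (1 - q ^ (N + 1)) * (z * c * q) * leftPoly q N (z * q) (c * q) := by
  rw [leftPoly, sum_range_succ', leftPoly, mul_sum, add_comm]
  congr 1
  · simp
  · refine sum_congr rfl fun n _ => ?_
    rw [qDescFactorial_succ_succ, Nat.add_sub_add_right, pow_succ' q n, ← mul_assoc (z * q),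
      ← mul_assoc (c * q)]
    ring

lemma rightPoly_succ (N : ℕ) (z c : ℂ) :
    rightPoly q (N + 1) z c = qPoch q (z * q) (N + 1) * qPoch q (c * q) (N + 1) +
      (1 - q ^ (N + 1)) * (c * q) * rightPoly q N (z * q) c := by
  rw [rightPoly, sum_range_succ', rightPoly, mul_sum, add_comm]
  congr 1
  · simp
  · refine sum_congr rfl fun n _ => ?_
    rw [qDescFactorial_succ_succ, Nat.add_sub_add_right, pow_succ' q n, ← mul_assoc (z * q)]
    ring

lemma rightPoly_sub_mul_rightPoly (N : ℕ) (z c : ℂ) :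
    rightPoly q N z c - z * rightPoly q N z (c * q) =
      qPoch q z (N + 1) * qPoch q (c * q * q) N := by
  induction N generalizing z with
  | zero => simp [rightPoly_zero, qPoch_succ]
  | succ N ih =>
    rw [rightPoly_succ, rightPoly_succ, qPoch_succ' q z (N + 1), qPoch_succ' q (c * q) N,
      qPoch_succ q (c * q * q) N]
    linear_combination (1 - q ^ (N + 1)) * (c * q) * ih (z * q)

lemma leftPoly_mul_eq_rightPoly (N : ℕ) (z c : ℂ) :
    leftPoly q N z (c * q) = rightPoly q N z c := by
  induction N generalizing z c with
  | zero => rw [leftPoly_zero, rightPoly_zero]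
  | succ N ih =>
    rw [leftPoly_succ, rightPoly_succ, ih, qPoch_succ' q (c * q) N, qPoch_succ q (c * q * q) N]
    linear_combination -(1 - q ^ (N + 1)) * (c * q) * rightPoly_sub_mul_rightPoly q N (z * q) c

lemma leftPoly_eq_add_mul_rightPoly (N : ℕ) (z c : ℂ) :
    leftPoly q N z c =
      (1 - z) * (qPoch q (z * q) N * qPoch q (c * q) N) + z * rightPoly q N z c := by
  cases N with
  | zero => simp [leftPoly_zero, rightPoly_zero]
  | succ N =>
    rw [leftPoly_succ, rightPoly_succ, leftPoly_mul_eq_rightPoly]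
    ring

end ClearedSums

lemma qPoch_self_ne_zero {q : ℂ} (hq : ‖q‖ < 1) (n : ℕ) : qPoch q q n ≠ 0 := by
  have h : ∀ k ∈ Icc 1 n, 1 * q ^ k ≠ 1 := fun k hk => by
    rw [one_mul]
    refine ne_of_apply_ne norm (ne_of_lt ?_)
    rw [norm_pow, norm_one]
    exact pow_lt_one₀ (norm_nonneg q) hq (Nat.one_le_iff_ne_zero.mp (mem_Icc.1 hk).1)
  simpa using qPoch_ne_zero q h

lemma qPoch_eq_mul_qPoch_sub {q : ℂ} {n N : ℕ} (hn : n ≤ N) (a : ℂ) :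
    qPoch q a N = qPoch q a n * qPoch q (a * q ^ n) (N - n) := by
  rw [← qPoch_add, Nat.add_sub_cancel' hn]

lemma leftPoly_eq {q z c : ℂ} {N : ℕ} (hq : ∀ n, qPoch q q n ≠ 0)
    (hz : qPoch q (z * q) N ≠ 0) (hc : qPoch q (c * q) N ≠ 0) :
    leftPoly q N z c = qPoch q (z * q) N * qPoch q (c * q) N * (1 + ∑ n ∈ Icc 1 N,
      qBinom q N n * (qPoch q q n * (z * c) ^ n * q ^ (n ^ 2)) /
        (qPoch q (z * q) n * qPoch q (c * q) n)) := by
  rw [leftPoly, sum_range_succ_eq_add_sum_Icc, mul_add, mul_sum]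
  congr 1
  · simp
  · refine sum_congr rfl fun n hn => ?_
    have hnN := (mem_Icc.1 hn).2
    have hzn := left_ne_zero_of_mul (qPoch_eq_mul_qPoch_sub hnN (z * q) ▸ hz)
    have hcn := left_ne_zero_of_mul (qPoch_eq_mul_qPoch_sub hnN (c * q) ▸ hc)
    rw [qPoch_eq_mul_qPoch_sub hnN (z * q), qPoch_eq_mul_qPoch_sub hnN (c * q),
      ← qBinom_mul_qPoch q hnN (hq n) (hq _), mul_div_assoc', eq_div_iff (mul_ne_zero hzn hcn)]
    ring

lemma rightPoly_eq {q z c : ℂ} {N : ℕ} (hq : ∀ n, qPoch q q n ≠ 0)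
    (hz : qPoch q (z * q) N ≠ 0) (hc : qPoch q (c * q) N ≠ 0) :
    rightPoly q N z c = qPoch q (z * q) N * qPoch q (c * q) N * (1 + ∑ n ∈ Icc 1 N,
      qBinom q N n * (qPoch q q n * qPoch q (c * q) (N - n) * (c * q) ^ n) /
        (qPoch q (z * q) n * qPoch q (c * q) N)) := by
  rw [rightPoly, sum_range_succ_eq_add_sum_Icc, mul_add, mul_sum]
  congr 1
  · simp
  · refine sum_congr rfl fun n hn => ?_
    have hnN := (mem_Icc.1 hn).2
    have hzn := left_ne_zero_of_mul (qPoch_eq_mul_qPoch_sub hnN (z * q) ▸ hz)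
    rw [qPoch_eq_mul_qPoch_sub hnN (z * q), ← qBinom_mul_qPoch q hnN (hq n) (hq _),
      mul_div_assoc', eq_div_iff (mul_ne_zero hzn hc)]
    ring

theorem stmt_2_general (N : ℕ) (q z c : ℂ) (hq : ‖q‖ < 1)
    (hz : ∀ k ∈ Finset.Icc 1 N, z * q ^ k ≠ 1)
    (hcq : ∀ k ∈ Finset.Icc 1 N, c * q ^ k ≠ 1) :
    ∑ n ∈ Finset.Icc 1 N, qBinom q N n *
        (qPoch q q n * (z * c) ^ n * q ^ (n ^ 2)) /
        (qPoch q (z * q) n * qPoch q (c * q) n)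
      = z * ∑ n ∈ Finset.Icc 1 N, qBinom q N n *
          (qPoch q q n * qPoch q (c * q) (N - n) * (c * q) ^ n) /
          (qPoch q (z * q) n * qPoch q (c * q) N) := by
  have hqq := qPoch_self_ne_zero hq
  have hzN := qPoch_ne_zero q hz
  have hcN := qPoch_ne_zero q hcq
  have key := leftPoly_eq_add_mul_rightPoly q N z c
  rw [leftPoly_eq hqq hzN hcN, rightPoly_eq hqq hzN hcN] at key
  exact mul_left_cancel₀ (mul_ne_zero hzN hcN) (by linear_combination key)

theorem stmt_2 (N : ℕ) (hN : 1 ≤ N) (q z c : ℂ) (hq : ‖q‖ < 1)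
    (hz : ∀ k ∈ Finset.Icc 1 N, z * q ^ k ≠ 1)
    (hcq : ∀ k ∈ Finset.Icc 1 N, c * q ^ k ≠ 1) :
    ∑ n ∈ Finset.Icc 1 N, qBinom q N n *
        (qPoch q q n * (z * c) ^ n * q ^ (n ^ 2)) /
        (qPoch q (z * q) n * qPoch q (c * q) n)
      = z * ∑ n ∈ Finset.Icc 1 N, qBinom q N n *
          (qPoch q q n * qPoch q (c * q) (N - n) * (c * q) ^ n) /
          (qPoch q (z * q) n * qPoch q (c * q) N) :=
  stmt_2_general N q z c hq hz hcq
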